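/- arXiv:1006.1176 — 5 statements merged into one kernel-verified Lean document; each statement's English description precedes it below -/
import Mathlib

section
/- Let (α, v) be a cocycle crossed action of a group G on a group U, let H ⊴ G be a normal subgroup with v(m,n) = 1 for all m, n ∈ H, let s : G/H → G be a section with s(ē) = e, and set m(p,q) := s(pq)⁻¹ s(p) s(q) ∈ H and c(p,q) := v(s(p), s(q)) · v(s(pq), m(p,q))⁻¹. Then for all p, q, r ∈ G/H the following identity holds in U: c(p,q) · α_{s(pq)}( δv(s(r), m(p,q))⁻¹ ) · c(pq, r) = α_{s(p)}( c(q,r) ) · c(p, qr), where δv(g,n) = v(g, g⁻¹ng) v(n,g)⁻¹. -/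
/-!
Write `a, b, d` for the lifts of `p, q, r` and `t` for the lift of `pqr`. Expanding every
`α` with the cocycle identity, and using that on `H` the cocycle identity degenerates to
`v g m · v (g m) n = v g (m n)`, both sides collapse to
`v(a,b) · v(ab,d) · v(t, t⁻¹abd)⁻¹`.
-/

section CocycleCrossedAction

variable {G U : Type*} [Group G] [Group U] {α : G → MulAut U} {v : G → G → U}

theorem map_apply_cocycle
    (hcoc : ∀ g h k : G, v g h * v (g * h) k = α g (v h k) * v g (h * k)) (g h k : G) :
    α g (v h k) = v g h * v (g * h) k * (v g (h * k))⁻¹ :=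
  eq_mul_inv_of_mul_eq (hcoc g h k).symm

theorem cocycle_mul_of_eq_one
    (hcoc : ∀ g h k : G, v g h * v (g * h) k = α g (v h k) * v g (h * k)) {h k : G}
    (hhk : v h k = 1) (g : G) :
    v g h * v (g * h) k = v g (h * k) := by
  rw [hcoc, hhk, map_one, one_mul]

theorem map_apply_inv_coboundary
    (hcoc : ∀ g h k : G, v g h * v (g * h) k = α g (v h k) * v g (h * k)) (e d x : G) :
    α e ((v d (d⁻¹ * x * d) * (v x d)⁻¹)⁻¹) =
      v e x * v (e * x) d * (v (e * d) (d⁻¹ * x * d))⁻¹ * (v e d)⁻¹ := by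
  have hxd : d * (d⁻¹ * x * d) = x * d := by group
  simp only [mul_inv_rev, inv_inv, map_mul, map_inv, map_apply_cocycle hcoc, hxd]
  group

theorem map_apply_cocycle_mul_inv
    (hcoc : ∀ g h k : G, v g h * v (g * h) k = α g (v h k) * v g (h * k)) (a : G)
    {b d f z : G} (hfz : f * z = b * d) :
    α a (v b d * (v f z)⁻¹) = v a b * v (a * b) d * (v (a * f) z)⁻¹ * (v a f)⁻¹ := by
  simp only [map_mul, map_inv, map_apply_cocycle hcoc, hfz]
  group

theorem cocycle_twisted_lhs_eq
    (hcoc : ∀ g h k : G, v g h * v (g * h) k = α g (v h k) * v g (h * k))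
    {a b d e t x y : G} (hx : e * x = a * b) (hy : t * y = e * d)
    (hyx : v y (d⁻¹ * x * d) = 1) :
    v a b * (v e x)⁻¹ * α e ((v d (d⁻¹ * x * d) * (v x d)⁻¹)⁻¹) *
        (v e d * (v t y)⁻¹) =
      v a b * v (a * b) d * (v t (y * (d⁻¹ * x * d)))⁻¹ := by
  rw [map_apply_inv_coboundary hcoc, hx, ← hy, ← cocycle_mul_of_eq_one hcoc hyx]
  group

theorem cocycle_twisted_rhs_eq
    (hcoc : ∀ g h k : G, v g h * v (g * h) k = α g (v h k) * v g (h * k))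
    {a b d f t w z : G} (hz : f * z = b * d) (hw : t * w = a * f) (hwz : v w z = 1) :
    α a (v b d * (v f z)⁻¹) * (v a f * (v t w)⁻¹) =
      v a b * v (a * b) d * (v t (w * z))⁻¹ := by
  rw [map_apply_cocycle_mul_inv hcoc a hz, ← hw, ← cocycle_mul_of_eq_one hcoc hwz]
  group

end CocycleCrossedAction

theorem QuotientGroup.section_mul_inv_mul_mem {G : Type*} [Group G] {H : Subgroup G}
    [H.Normal] {s : G ⧸ H → G} (hs : ∀ p : G ⧸ H, (QuotientGroup.mk (s p) : G ⧸ H) = p)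
    (p q : G ⧸ H) :
    (s (p * q))⁻¹ * s p * s q ∈ H := by
  rw [← QuotientGroup.eq_one_iff]
  simp only [QuotientGroup.mk_mul, QuotientGroup.mk_inv, hs]
  group

theorem stmt4_general {G U : Type*} [Group G] [Group U]
    (α : G → MulAut U) (v : G → G → U)
    (hcoc : ∀ g h k : G, v g h * v (g * h) k = α g (v h k) * v g (h * k))
    (H : Subgroup G) [H.Normal]
    (hvH : ∀ m n : G, m ∈ H → n ∈ H → v m n = 1)
    (s : G ⧸ H → G)
    (hs : ∀ p : G ⧸ H, (QuotientGroup.mk (s p) : G ⧸ H) = p)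
    (m : G ⧸ H → G ⧸ H → G)
    (hm : ∀ p q : G ⧸ H, m p q = (s (p * q))⁻¹ * s p * s q)
    (c : G ⧸ H → G ⧸ H → U)
    (hc : ∀ p q : G ⧸ H, c p q = v (s p) (s q) * (v (s (p * q)) (m p q))⁻¹)
    (δv : G → G → U)
    (hδ : ∀ g n : G, δv g n = v g (g⁻¹ * n * g) * (v n g)⁻¹) :
    ∀ p q r : G ⧸ H,
      c p q * α (s (p * q)) ((δv (s r) (m p q))⁻¹) * c (p * q) r =
        α (s p) (c q r) * c p (q * r) := by
  intro p q r
  have hmH : ∀ p q, m p q ∈ H := fun p q =>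
    hm p q ▸ QuotientGroup.section_mul_inv_mul_mem hs p q
  have hlift : ∀ p q, s (p * q) * m p q = s p * s q := fun p q => by rw [hm]; group
  have hconj : (s r)⁻¹ * m p q * s r ∈ H := ‹H.Normal›.conj_mem' _ (hmH p q) _
  have hprod : m (p * q) r * ((s r)⁻¹ * m p q * s r) = m p (q * r) * m q r := by
    simp only [hm, mul_assoc p q r]
    group
  rw [hc p q, hc (p * q) r, hc q r, hc p (q * r), hδ, ← mul_assoc p q r,
    cocycle_twisted_lhs_eq hcoc (hlift p q) (hlift (p * q) r) (hvH _ _ (hmH _ _) hconj),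
    cocycle_twisted_rhs_eq hcoc (hlift q r) (by rw [mul_assoc p q r, hlift])
      (hvH _ _ (hmH _ _) (hmH _ _)),
    hprod]

/-- 2-cocycle-type identity for the quasi cocycle crossed action of `Q = G/H`
(assuming the 2-cocycle `v` is trivial on `H`):
`c(p,q)·α_{s(pq)}(δv(s(r),m(p,q))⁻¹)·c(pq,r) = α_{s(p)}(c(q,r))·c(p,qr)`. -/
theorem stmt4 {G U : Type*} [Group G] [Group U]
    (α : G → MulAut U) (v : G → G → U)
    (hα1 : α 1 = 1)
    (hv1 : ∀ h : G, v 1 h = 1) (hv2 : ∀ g : G, v g 1 = 1)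
    (hAd : ∀ g h : G, ∀ x : U, α g (α h x) = v g h * α (g * h) x * (v g h)⁻¹)
    (hcoc : ∀ g h k : G, v g h * v (g * h) k = α g (v h k) * v g (h * k))
    (H : Subgroup G) [H.Normal]
    (hvH : ∀ m n : G, m ∈ H → n ∈ H → v m n = 1)
    (s : G ⧸ H → G)
    (hs : ∀ p : G ⧸ H, (QuotientGroup.mk (s p) : G ⧸ H) = p)
    (hse : s 1 = 1)
    (m : G ⧸ H → G ⧸ H → G)
    (hm : ∀ p q : G ⧸ H, m p q = (s (p * q))⁻¹ * s p * s q)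
    (c : G ⧸ H → G ⧸ H → U)
    (hc : ∀ p q : G ⧸ H, c p q = v (s p) (s q) * (v (s (p * q)) (m p q))⁻¹)
    (δv : G → G → U)
    (hδ : ∀ g n : G, δv g n = v g (g⁻¹ * n * g) * (v n g)⁻¹) :
    ∀ p q r : G ⧸ H,
      c p q * α (s (p * q)) ((δv (s r) (m p q))⁻¹) * c (p * q) r =
        α (s p) (c q r) * c p (q * r) :=
  stmt4_general α v hcoc H hvH s hs m hm c hc δv hδ
end

section
/- Let (α, v) be a cocycle crossed action of a group G on a group U, H ⊴ G normal with v(m,n) = 1 for m,n ∈ H, s : G/H → G a section with s(ē) = e, m(p,q) = s(pq)⁻¹ s(p) s(q), and c(p,q) = v(s(p),s(q)) v(s(pq), m(p,q))⁻¹. Then for all p,q ∈ G/H one has, as automorphisms of U: α_{s(p)} ∘ α_{s(q)} = Ad(c(p,q)) ∘ α_{s(pq)} ∘ α_{m(p,q)}. -/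
theorem apply_apply_eq_conj_apply_apply_of_mul_eq {G U : Type*} [Group G] [Group U]
    (α : G → MulAut U) (v : G → G → U)
    (hAd : ∀ g h : G, ∀ x : U, α g (α h x) = v g h * α (g * h) x * (v g h)⁻¹)
    {g h k l : G} (hmul : k * l = g * h) (x : U) :
    α g (α h x) = v g h * (v k l)⁻¹ * α k (α l x) * (v g h * (v k l)⁻¹)⁻¹ := by
  rw [hAd g h, hAd k l, hmul]
  group

theorem stmt6_general {G U : Type*} [Group G] [Group U]
    (α : G → MulAut U) (v : G → G → U)
    (hAd : ∀ g h : G, ∀ x : U, α g (α h x) = v g h * α (g * h) x * (v g h)⁻¹)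
    (H : Subgroup G) [H.Normal]
    (s : G ⧸ H → G)
    (m : G ⧸ H → G ⧸ H → G)
    (hm : ∀ p q : G ⧸ H, m p q = (s (p * q))⁻¹ * s p * s q)
    (c : G ⧸ H → G ⧸ H → U)
    (hc : ∀ p q : G ⧸ H, c p q = v (s p) (s q) * (v (s (p * q)) (m p q))⁻¹) :
    ∀ p q : G ⧸ H, ∀ x : U,
      α (s p) (α (s q) x) =
        c p q * α (s (p * q)) (α (m p q) x) * (c p q)⁻¹ := by
  intro p q x
  have hmul : s (p * q) * m p q = s p * s q := by rw [hm]; group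
  rw [hc]
  exact apply_apply_eq_conj_apply_apply_of_mul_eq α v hAd hmul x

/-- `α_{s(p)} ∘ α_{s(q)} = Ad(c(p,q)) ∘ α_{s(pq)} ∘ α_{m(p,q)}` as maps on `U`. -/
theorem stmt6 {G U : Type*} [Group G] [Group U]
    (α : G → MulAut U) (v : G → G → U)
    (hα1 : α 1 = 1)
    (hv1 : ∀ h : G, v 1 h = 1) (hv2 : ∀ g : G, v g 1 = 1)
    (hAd : ∀ g h : G, ∀ x : U, α g (α h x) = v g h * α (g * h) x * (v g h)⁻¹)
    (hcoc : ∀ g h k : G, v g h * v (g * h) k = α g (v h k) * v g (h * k))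
    (H : Subgroup G) [H.Normal]
    (hvH : ∀ m n : G, m ∈ H → n ∈ H → v m n = 1)
    (s : G ⧸ H → G)
    (hs : ∀ p : G ⧸ H, (QuotientGroup.mk (s p) : G ⧸ H) = p)
    (hse : s 1 = 1)
    (m : G ⧸ H → G ⧸ H → G)
    (hm : ∀ p q : G ⧸ H, m p q = (s (p * q))⁻¹ * s p * s q)
    (c : G ⧸ H → G ⧸ H → U)
    (hc : ∀ p q : G ⧸ H, c p q = v (s p) (s q) * (v (s (p * q)) (m p q))⁻¹) :
    ∀ p q : G ⧸ H, ∀ x : U,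
      α (s p) (α (s q) x) =
        c p q * α (s (p * q)) (α (m p q) x) * (c p q)⁻¹ :=
  stmt6_general α v hAd H s m hm c hc
end

section
/- Let (α, v) be a cocycle crossed action of a group G on a group U, let U ⋊_v G be the twisted semidirect product, let H ⊴ G be normal, and set H̄ := { (u⁻¹, n) ∈ U × G : n ∈ H and Ad(u) = α_n as automorphisms of U }. Then H̄ is a normal subgroup of U ⋊_v G, and moreover every element of the form (w, e) with w ∈ U commutes with every element of H̄. -/
/-!
The map `φ : U ⋊_v G → Aut U`, `(u, g) ↦ Ad(u) ∘ α_g`, is a homomorphism: the relation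
`α_g ∘ α_h = Ad(v(g,h)) ∘ α_{gh}` absorbs the cocycle in `Ad(u α_g(w) v(g,h)) ∘ α_{gh}`.
Hence `H̄ = ker φ ∩ π⁻¹(H)`, with `π` the projection to `G`, is an intersection of two normal
subgroups. An element `(w, e)` commutes with `(u⁻¹, n) ∈ ker φ` because `α_n(w) = u w u⁻¹`.
-/

theorem MulAut.conj_map {U : Type*} [Group U] (f : MulAut U) (x : U) :
    MulAut.conj (f x) = f * MulAut.conj x * f⁻¹ := by
  ext y
  simp only [MulAut.conj_apply, MulAut.mul_apply, map_mul, map_inv, MulAut.apply_inv_self]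

structure CocycleCrossedAction (G U : Type*) [Group G] [Group U] where
  act : G → MulAut U
  cocycle : G → G → U
  act_one : act 1 = 1
  cocycle_one_left : ∀ h, cocycle 1 h = 1
  cocycle_one_right : ∀ g, cocycle g 1 = 1
  act_mul_act : ∀ g h, act g * act h = MulAut.conj (cocycle g h) * act (g * h)
  cocycle_mul : ∀ g h k,
    cocycle g h * cocycle (g * h) k = act g (cocycle h k) * cocycle g (h * k)

namespace CocycleCrossedAction

variable {G U : Type*} [Group G] [Group U] (c : CocycleCrossedAction G U)

theorem act_act_apply (g h : G) (x : U) :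
    c.act g (c.act h x) = c.cocycle g h * c.act (g * h) x * (c.cocycle g h)⁻¹ :=
  DFunLike.congr_fun (c.act_mul_act g h) x

/-- The twisted semidirect product `U ⋊_v G`. -/
def TwistedProd (_ : CocycleCrossedAction G U) : Type _ := U × G

instance : Mul c.TwistedProd :=
  ⟨fun a b => (a.1 * c.act a.2 b.1 * c.cocycle a.2 b.2, a.2 * b.2)⟩

instance : One c.TwistedProd := ⟨(1, 1)⟩

instance : Inv c.TwistedProd :=
  ⟨fun a => ((c.act a.2⁻¹ a.1 * c.cocycle a.2⁻¹ a.2)⁻¹, a.2⁻¹)⟩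

theorem fst_mul (a b : c.TwistedProd) : (a * b).1 = a.1 * c.act a.2 b.1 * c.cocycle a.2 b.2 :=
  rfl

theorem snd_mul (a b : c.TwistedProd) : (a * b).2 = a.2 * b.2 :=
  rfl

theorem twistedProd_mul_assoc (a b d : c.TwistedProd) : a * b * d = a * (b * d) := by
  refine Prod.ext ?_ (mul_assoc a.2 b.2 d.2)
  simp only [fst_mul, snd_mul, map_mul, c.act_act_apply, mul_assoc]
  rw [← c.cocycle_mul]
  group

theorem twistedProd_one_mul (a : c.TwistedProd) : 1 * a = a := by
  refine Prod.ext ?_ (one_mul a.2)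
  show 1 * c.act 1 a.1 * c.cocycle 1 a.2 = a.1
  rw [c.act_one, c.cocycle_one_left, MulAut.one_apply, one_mul, mul_one]

theorem twistedProd_inv_mul_cancel (a : c.TwistedProd) : a⁻¹ * a = 1 := by
  refine Prod.ext ?_ (inv_mul_cancel a.2)
  show (c.act a.2⁻¹ a.1 * c.cocycle a.2⁻¹ a.2)⁻¹ * c.act a.2⁻¹ a.1 * c.cocycle a.2⁻¹ a.2 = 1
  rw [mul_assoc, inv_mul_cancel]

instance : Group c.TwistedProd :=
  Group.ofLeftAxioms c.twistedProd_mul_assoc c.twistedProd_one_mul c.twistedProd_inv_mul_cancel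

def proj : c.TwistedProd →* G where
  toFun a := a.2
  map_one' := rfl
  map_mul' _ _ := rfl

def toMulAut : c.TwistedProd →* MulAut U where
  toFun a := MulAut.conj a.1 * c.act a.2
  map_one' := by
    show MulAut.conj (1 : U) * c.act 1 = 1
    rw [map_one, c.act_one, one_mul]
  map_mul' a b := by
    show MulAut.conj (a.1 * c.act a.2 b.1 * c.cocycle a.2 b.2) * c.act (a.2 * b.2) = _
    simp only [map_mul, MulAut.conj_map, mul_assoc, ← c.act_mul_act]
    group

theorem mem_ker_toMulAut_iff (a : c.TwistedProd) :
    a ∈ c.toMulAut.ker ↔ ∀ y, c.act a.2 y = a.1⁻¹ * y * a.1 := by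
  rw [MonoidHom.mem_ker]
  show MulAut.conj a.1 * c.act a.2 = 1 ↔ _
  rw [mul_eq_one_iff_eq_inv', ← map_inv, DFunLike.ext_iff]
  simp only [MulAut.conj_apply, inv_inv]

theorem commute_of_snd_eq_one_of_mem_ker {b a : c.TwistedProd} (hb : b.2 = 1)
    (ha : a ∈ c.toMulAut.ker) : Commute b a := by
  rw [mem_ker_toMulAut_iff] at ha
  refine Prod.ext ?_ (by rw [snd_mul, snd_mul, hb, one_mul, mul_one])
  rw [fst_mul, fst_mul, hb, ha, c.act_one, c.cocycle_one_left, c.cocycle_one_right,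
    MulAut.one_apply]
  group

theorem mem_ker_inf_comap_proj_iff (H : Subgroup G) (a : c.TwistedProd) :
    a ∈ c.toMulAut.ker ⊓ H.comap c.proj ↔ a.2 ∈ H ∧ ∀ y, c.act a.2 y = a.1⁻¹ * y * a.1 := by
  rw [Subgroup.mem_inf, mem_ker_toMulAut_iff, and_comm]
  rfl

end CocycleCrossedAction

/-- `H̄ = {(u⁻¹,n) : n ∈ H, Ad(u) = α_n}` is a normal subgroup of `U ⋊_v G`,
and every element `(w,e)` with `w ∈ U` commutes with every element of `H̄`. -/
theorem stmt7 {G U : Type*} [Group G] [Group U]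
    (α : G → MulAut U) (v : G → G → U)
    (hα1 : α 1 = 1)
    (hv1 : ∀ h : G, v 1 h = 1) (hv2 : ∀ g : G, v g 1 = 1)
    (hAd : ∀ g h : G, ∀ x : U, α g (α h x) = v g h * α (g * h) x * (v g h)⁻¹)
    (hcoc : ∀ g h k : G, v g h * v (g * h) k = α g (v h k) * v g (h * k))
    (mul' : U × G → U × G → U × G)
    (hmul : ∀ a b : U × G, mul' a b = (a.1 * α a.2 b.1 * v a.2 b.2, a.2 * b.2))
    (H : Subgroup G) [H.Normal]
    (Hbar : Set (U × G))
    (hHbar : ∀ x : U × G, x ∈ Hbar ↔ x.2 ∈ H ∧ ∀ y : U, α x.2 y = x.1⁻¹ * y * x.1) :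
    (((1 : U), (1 : G)) ∈ Hbar) ∧
    (∀ x ∈ Hbar, ∀ y ∈ Hbar, mul' x y ∈ Hbar) ∧
    (∀ x ∈ Hbar, ∃ y ∈ Hbar,
      mul' x y = ((1 : U), (1 : G)) ∧ mul' y x = ((1 : U), (1 : G))) ∧
    (∀ a b : U × G, mul' a b = ((1 : U), (1 : G)) → mul' b a = ((1 : U), (1 : G)) →
      ∀ x ∈ Hbar, mul' (mul' a x) b ∈ Hbar) ∧
    (∀ w : U, ∀ x ∈ Hbar, mul' (w, (1 : G)) x = mul' x (w, (1 : G))) := by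
  let c : CocycleCrossedAction G U :=
    ⟨α, v, hα1, hv1, hv2, fun g h => MulEquiv.ext (hAd g h), hcoc⟩
  let Hbar' : Subgroup c.TwistedProd := c.toMulAut.ker ⊓ H.comap c.proj
  obtain rfl : mul' = (· * · : c.TwistedProd → c.TwistedProd → c.TwistedProd) :=
    funext₂ hmul
  obtain rfl : Hbar = (Hbar' : Set c.TwistedProd) :=
    Set.ext fun x => (hHbar x).trans (c.mem_ker_inf_comap_proj_iff H x).symm
  -- `c.TwistedProd` is `U × G` by definition, so the goal can be read inside this group
  change (1 : c.TwistedProd) ∈ Hbar' ∧ (∀ x ∈ Hbar', ∀ y ∈ Hbar', x * y ∈ Hbar') ∧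
    (∀ x ∈ Hbar', ∃ y ∈ Hbar', x * y = 1 ∧ y * x = 1) ∧
    (∀ a b : c.TwistedProd, a * b = 1 → b * a = 1 → ∀ x ∈ Hbar', a * x * b ∈ Hbar') ∧
    ∀ w : U, ∀ x ∈ Hbar', Commute (show c.TwistedProd from (w, 1)) x
  refine ⟨Hbar'.one_mem, fun x hx y hy => Hbar'.mul_mem hx hy,
    fun x hx => ⟨x⁻¹, Hbar'.inv_mem hx, mul_inv_cancel x, inv_mul_cancel x⟩,
    fun a b hab _ x hx => ?_, fun w x hx => c.commute_of_snd_eq_one_of_mem_ker rfl hx.1⟩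
  rw [eq_inv_of_mul_eq_one_right hab]
  exact Subgroup.Normal.conj_mem inferInstance x hx a
end

section
/- Let G be a group, H ⊴ G normal with quotient Q = G/H, s : Q → G a section with s(ē) = e, and m(p,q) = s(pq)⁻¹s(p)s(q) ∈ H. Let A be an abelian group with a G-action α (factoring appropriately), and let (λ, μ) be a characteristic cocycle for (G, H, A). Define δ_{λ,μ}(p,q,r) := α_{s(pq)}(λ(s(r), m(p,q)))⁻¹ · α_{s(pqr)}( μ(m(pq,r), s(r)⁻¹ m(p,q) s(r)) · μ(m(p,qr), m(q,r))⁻¹ ). Then if (λ, μ) is a coboundary, i.e. λ(g,n) = α_g(z_{g⁻¹ng})z_n⁻¹ and μ(m,n) = z_m z_n z_{mn}⁻¹ for some z : H → A with z_e = 1 (with α trivial on A restricted to H), the function δ_{λ,μ} : Q³ → A is a 3-coboundary of Q; in particular δ : (λ,μ) ↦ δ_{λ,μ} descends to a well-defined homomorphism from the quotient group Λ = Z/B of characteristic invariants to H³ of Q (with the induced Q-action on A). -/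
/-- `m(p,q) = s(pq)⁻¹ s(p) s(q)`. -/
def hjrM {G : Type*} [Group G] (H : Subgroup G) [H.Normal]
    (s : G ⧸ H → G) (p q : G ⧸ H) : G :=
  (s (p * q))⁻¹ * s p * s q

/-- The generalized Huebschmann–Jones–Ratcliffe map `δ_{λ,μ}`. -/
def hjrDelta {G A : Type*} [Group G] [CommGroup A]
    (α : G →* MulAut A) (H : Subgroup G) [H.Normal]
    (s : G ⧸ H → G) (lam mu : G → G → A) (p q r : G ⧸ H) : A :=
  (α (s (p * q)) (lam (s r) (hjrM H s p q)))⁻¹ *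
    α (s (p * q * r))
      (mu (hjrM H s (p * q) r) ((s r)⁻¹ * hjrM H s p q * s r) *
        (mu (hjrM H s p (q * r)) (hjrM H s q r))⁻¹)

/-!
With `η(p,q) = α_{s(pq)}(z(m(p,q)))⁻¹`, the coboundary of `η` is `δ_{λ,μ}` whenever `(λ,μ)` is the
coboundary of `z`. Two facts about the section make this work: the factor set `m` satisfies the
nonabelian cocycle identity `m(pq,r) · s(r)⁻¹ m(p,q) s(r) = m(p,qr) · m(q,r)`, which lets the
`z`-terms coming from `μ` cancel, and since `H` acts trivially, `p ↦ α_{s(p)}` is an honest action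
of `Q = G/H` on `A`.
-/

namespace hjrM

variable {G : Type*} [Group G] {H : Subgroup G} [H.Normal] {s : G ⧸ H → G}

theorem mem (hs : ∀ p : G ⧸ H, (QuotientGroup.mk (s p) : G ⧸ H) = p) (p q : G ⧸ H) :
    hjrM H s p q ∈ H := by
  rw [← QuotientGroup.eq_one_iff]
  simp only [hjrM, QuotientGroup.mk_mul, QuotientGroup.mk_inv, hs]
  group

theorem section_mul_section (p q : G ⧸ H) : s p * s q = s (p * q) * hjrM H s p q := by
  simp only [hjrM]
  group

theorem mul_conj_eq_mul (p q r : G ⧸ H) :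
    hjrM H s (p * q) r * ((s r)⁻¹ * hjrM H s p q * s r) = hjrM H s p (q * r) * hjrM H s q r := by
  simp only [hjrM, ← mul_assoc]
  group

end hjrM

section

variable {G A : Type*} [Group G] [CommGroup A] (α : G →* MulAut A) (H : Subgroup G) [H.Normal]
  (s : G ⧸ H → G)

def hjrEta (z : G → A) (p q : G ⧸ H) : A :=
  (α (s (p * q)) (z (hjrM H s p q)))⁻¹

theorem map_section_apply_map_section_apply
    (hs : ∀ p : G ⧸ H, (QuotientGroup.mk (s p) : G ⧸ H) = p)
    (htriv : ∀ m ∈ H, ∀ a : A, α m a = a) (p q : G ⧸ H) (a : A) :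
    α (s p) (α (s q) a) = α (s (p * q)) a := by
  rw [← MulAut.mul_apply, ← map_mul, hjrM.section_mul_section, map_mul, MulAut.mul_apply,
    htriv _ (hjrM.mem hs p q)]

theorem hjrDelta_mul (lam mu lam' mu' : G → G → A) (p q r : G ⧸ H) :
    hjrDelta α H s (fun g n => lam g n * lam' g n) (fun a b => mu a b * mu' a b) p q r =
      hjrDelta α H s lam mu p q r * hjrDelta α H s lam' mu' p q r := by
  apply Additive.ofMul.injective
  simp only [hjrDelta, map_mul, map_inv, ofMul_mul, ofMul_inv]
  abel

theorem hjrDelta_of_coboundary_eq (z : G → A) (lam mu : G → G → A)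
    (hs : ∀ p : G ⧸ H, (QuotientGroup.mk (s p) : G ⧸ H) = p)
    (htriv : ∀ m ∈ H, ∀ a : A, α m a = a)
    (hlam : ∀ g n : G, lam g n = α g (z (g⁻¹ * n * g)) * (z n)⁻¹)
    (hmu : ∀ m n : G, mu m n = z m * z n * (z (m * n))⁻¹) (p q r : G ⧸ H) :
    hjrDelta α H s lam mu p q r =
      α (s (p * q)) (z (hjrM H s p q)) *
        α (s (p * q * r)) (z (hjrM H s (p * q) r) * (z (hjrM H s p (q * r)))⁻¹ *
          (z (hjrM H s q r))⁻¹) := by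
  have hconj := map_section_apply_map_section_apply α H s hs htriv (p * q) r
    (z ((s r)⁻¹ * hjrM H s p q * s r))
  simp only [hjrDelta, hlam, hmu, hjrM.mul_conj_eq_mul, map_mul, map_inv, hconj]
  apply Additive.ofMul.injective
  simp only [ofMul_mul, ofMul_inv]
  abel

theorem hjrDelta_eq_coboundary (z : G → A) (lam mu : G → G → A)
    (hs : ∀ p : G ⧸ H, (QuotientGroup.mk (s p) : G ⧸ H) = p)
    (htriv : ∀ m ∈ H, ∀ a : A, α m a = a)
    (hlam : ∀ g n : G, lam g n = α g (z (g⁻¹ * n * g)) * (z n)⁻¹)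
    (hmu : ∀ m n : G, mu m n = z m * z n * (z (m * n))⁻¹) (p q r : G ⧸ H) :
    hjrDelta α H s lam mu p q r =
      α (s p) (hjrEta α H s z q r) * hjrEta α H s z p (q * r) *
        (hjrEta α H s z (p * q) r)⁻¹ * (hjrEta α H s z p q)⁻¹ := by
  rw [hjrDelta_of_coboundary_eq α H s z lam mu hs htriv hlam hmu]
  simp only [hjrEta, map_inv, inv_inv, map_mul, map_section_apply_map_section_apply α H s hs htriv,
    ← mul_assoc]
  apply Additive.ofMul.injective
  simp only [ofMul_mul, ofMul_inv]
  abel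

end

theorem stmt16_general {G A : Type*} [Group G] [CommGroup A]
    (α : G →* MulAut A) (H : Subgroup G) [H.Normal]
    (s : G ⧸ H → G)
    (hs : ∀ p : G ⧸ H, (QuotientGroup.mk (s p) : G ⧸ H) = p)
    (htriv : ∀ m ∈ H, ∀ a : A, α m a = a)
    (z : G → A)
    (lam : G → G → A)
    (hlam : ∀ g n : G, lam g n = α g (z (g⁻¹ * n * g)) * (z n)⁻¹)
    (mu : G → G → A)
    (hmu : ∀ m n : G, mu m n = z m * z n * (z (m * n))⁻¹) :
    (∃ η : G ⧸ H → G ⧸ H → A, ∀ p q r : G ⧸ H,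
      hjrDelta α H s lam mu p q r =
        α (s p) (η q r) * η p (q * r) * (η (p * q) r)⁻¹ * (η p q)⁻¹) ∧
    (∀ lam' mu' : G → G → A, ∀ p q r : G ⧸ H,
      hjrDelta α H s (fun g n => lam g n * lam' g n)
          (fun a b => mu a b * mu' a b) p q r =
        hjrDelta α H s lam mu p q r * hjrDelta α H s lam' mu' p q r) :=
  ⟨⟨_, hjrDelta_eq_coboundary α H s z lam mu hs htriv hlam hmu⟩, hjrDelta_mul α H s lam mu⟩

/-- If `(λ,μ)` is a coboundary (built from `z : H → A`, with the `H`-action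
on `A` trivial), then `δ_{λ,μ}` is a 3-coboundary of `Q = G/H` (w.r.t. the induced
`Q`-action `p ↦ α_{s(p)}`); moreover `δ` is multiplicative in `(λ,μ)`, hence descends to
a homomorphism on the quotient group of characteristic invariants. -/
theorem stmt16 {G A : Type*} [Group G] [CommGroup A]
    (α : G →* MulAut A) (H : Subgroup G) [H.Normal]
    (s : G ⧸ H → G)
    (hs : ∀ p : G ⧸ H, (QuotientGroup.mk (s p) : G ⧸ H) = p)
    (hse : s 1 = 1)
    (htriv : ∀ m ∈ H, ∀ a : A, α m a = a)
    (z : G → A) (hz1 : z 1 = 1)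
    (lam : G → G → A)
    (hlam : ∀ g n : G, lam g n = α g (z (g⁻¹ * n * g)) * (z n)⁻¹)
    (mu : G → G → A)
    (hmu : ∀ m n : G, mu m n = z m * z n * (z (m * n))⁻¹) :
    (∃ η : G ⧸ H → G ⧸ H → A, ∀ p q r : G ⧸ H,
      hjrDelta α H s lam mu p q r =
        α (s p) (η q r) * η p (q * r) * (η (p * q) r)⁻¹ * (η p q)⁻¹) ∧
    (∀ lam' mu' : G → G → A, ∀ p q r : G ⧸ H,
      hjrDelta α H s (fun g n => lam g n * lam' g n)
          (fun a b => mu a b * mu' a b) p q r =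
        hjrDelta α H s lam mu p q r * hjrDelta α H s lam' mu' p q r) :=
  stmt16_general α H s hs htriv z lam hlam mu hmu
end

section
/- Let (α, v) be a cocycle crossed action of a group G on a group U; suppose θ ∈ Aut(U), θ̂ ∈ Aut(G), and u : G → U satisfy θ ∘ α_{θ̂⁻¹(g)} ∘ θ⁻¹ = Ad(u_g) ∘ α_g and u_g · α_g(u_h) · v(g,h) · u_{gh}⁻¹ = θ( v(θ̂⁻¹(g), θ̂⁻¹(h)) ) for all g, h ∈ G. Then the map Θ : U ⋊_v G → U ⋊_v G defined by Θ(w, k) := ( θ(w) · u_{θ̂(k)}, θ̂(k) ) is a group automorphism of U ⋊_v G extending θ on U × {e} and sending (1, k) to (u_{θ̂(k)}, θ̂(k)). -/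
/-- Given compatible data `(θ, θ̂, u)` the map
`Θ(w,k) = (θ(w)·u_{θ̂(k)}, θ̂(k))` is an automorphism of `U ⋊_v G` extending `θ`
and sending `(1,k)` to `(u_{θ̂(k)}, θ̂(k))`. -/
theorem stmt17 {G U : Type*} [Group G] [Group U]
    (α : G → MulAut U) (v : G → G → U)
    (hα1 : α 1 = 1)
    (hv1 : ∀ h : G, v 1 h = 1) (hv2 : ∀ g : G, v g 1 = 1)
    (hAd : ∀ g h : G, ∀ x : U, α g (α h x) = v g h * α (g * h) x * (v g h)⁻¹)
    (hcoc : ∀ g h k : G, v g h * v (g * h) k = α g (v h k) * v g (h * k))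
    (mul' : U × G → U × G → U × G)
    (hmul : ∀ a b : U × G, mul' a b = (a.1 * α a.2 b.1 * v a.2 b.2, a.2 * b.2))
    (θ : U ≃* U) (θhat : G ≃* G) (u : G → U) (hue : u 1 = 1)
    (h1 : ∀ g : G, ∀ x : U,
      θ (α (θhat.symm g) (θ.symm x)) = u g * α g x * (u g)⁻¹)
    (h2 : ∀ g h : G,
      u g * α g (u h) * v g h * (u (g * h))⁻¹ =
        θ (v (θhat.symm g) (θhat.symm h)))
    (Θ : U × G → U × G)
    (hΘ : ∀ x : U × G, Θ x = (θ x.1 * u (θhat x.2), θhat x.2)) :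
    Function.Bijective Θ ∧
    (∀ a b : U × G, Θ (mul' a b) = mul' (Θ a) (Θ b)) ∧
    (∀ w : U, Θ (w, (1 : G)) = (θ w, (1 : G))) ∧
    (∀ k : G, Θ ((1 : U), k) = (u (θhat k), θhat k)) := by
  refine ⟨⟨?_, ?_⟩, ?_, ?_, ?_⟩
  · intro a b hab
    simp only [hΘ, Prod.mk.injEq] at hab
    obtain ⟨hx, hg⟩ := hab
    have hg2 : a.2 = b.2 := θhat.injective hg
    rw [hg2] at hx
    have hx2 : a.1 = b.1 := θ.injective (mul_right_cancel hx)
    exact Prod.ext hx2 hg2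
  · intro x
    refine ⟨(θ.symm (x.1 * (u x.2)⁻¹), θhat.symm x.2), ?_⟩
    simp [hΘ]
  · intro a b
    have hg := h1 (θhat a.2) (θ b.1)
    rw [θhat.symm_apply_apply, θ.symm_apply_apply] at hg
    have hh := h2 (θhat a.2) (θhat b.2)
    rw [θhat.symm_apply_apply, θhat.symm_apply_apply] at hh
    simp only [hmul, hΘ, map_mul, Prod.mk.injEq]
    refine ⟨?_, trivial⟩
    rw [hg, ← hh]
    group
  · intro w
    simp [hΘ, hue]
  · intro k
    simp [hΘ]
end
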